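/- arXiv:2504.06911 — 5 statements merged into one kernel-verified Lean document; each statement's English description precedes it below -/
import Mathlib

section
/- Let Γ be a triangle-free graph whose diagonal graph ⧄(Γ) is a tree, and suppose {a,b} and {a,c} are two distinct vertices of ⧄(Γ) sharing the vertex a in their support. Then the distance between {a,b} and {a,c} in ⧄(Γ) is not equal to 1 and not equal to 3. (Distance 1 is impossible since supports of adjacent vertices of ⧄(Γ) are disjoint; distance 3 is impossible since it would force an induced square inside the link of a, contradicting triangle-freeness.) -/
/-- `{a,b} * {c,d}` is an induced square of `Γ`. -/
def IsInducedSquare {V : Type*} (Γ : SimpleGraph V) (a b c d : V) : Prop :=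
  a ≠ b ∧ c ≠ d ∧ ¬ Γ.Adj a b ∧ ¬ Γ.Adj c d ∧
    Γ.Adj a c ∧ Γ.Adj a d ∧ Γ.Adj b c ∧ Γ.Adj b d

lemma IsInducedSquare.symm {V : Type*} {Γ : SimpleGraph V} {a b c d : V}
    (h : IsInducedSquare Γ a b c d) : IsInducedSquare Γ c d a b := by
  obtain ⟨h1, h2, h3, h4, h5, h6, h7, h8⟩ := h
  exact ⟨h2, h1, h4, h3, h5.symm, h7.symm, h6.symm, h8.symm⟩

/-- The diagonal graph of `Γ`: vertices are (potential) diagonal pairs, with an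
edge joining the two diagonal pairs of each induced square of `Γ`. -/
def diagGraph {V : Type*} (Γ : SimpleGraph V) : SimpleGraph (Sym2 V) where
  Adj p q := p ≠ q ∧ ∃ a b c d : V,
    p = s(a, b) ∧ q = s(c, d) ∧ IsInducedSquare Γ a b c d
  symm := ⟨by
    rintro p q ⟨hne, a, b, c, d, hp, hq, hsq⟩
    exact ⟨hne.symm, c, d, a, b, hq, hp, hsq.symm⟩⟩
  loopless := ⟨fun p h => h.1 rfl⟩

lemma diag_adj_support {V : Type*} {Γ : SimpleGraph V} {p q : Sym2 V}
    (h : (diagGraph Γ).Adj p q) {u v : V} (hu : u ∈ p) (hv : v ∈ q) :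
    Γ.Adj u v := by
  obtain ⟨-, a, b, c, d, hp, hq, h1, h2, h3, h4, h5, h6, h7, h8⟩ := h
  subst hp; subst hq
  rcases Sym2.mem_iff.mp hu with rfl | rfl <;>
    rcases Sym2.mem_iff.mp hv with rfl | rfl <;> assumption

theorem stmt_10 {V : Type*} (Γ : SimpleGraph V) (hTF : Γ.CliqueFree 3)
    (hTree : ((diagGraph Γ).induce
        {p : Sym2 V | ∃ q, (diagGraph Γ).Adj p q}).IsTree)
    (a b c : V) (hbc : b ≠ c)
    (hab : ∃ q, (diagGraph Γ).Adj s(a, b) q)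
    (hac : ∃ q, (diagGraph Γ).Adj s(a, c) q) :
    (diagGraph Γ).dist s(a, b) s(a, c) ≠ 1 ∧
    (diagGraph Γ).dist s(a, b) s(a, c) ≠ 3 := by
  constructor
  · intro h1
    rw [SimpleGraph.dist_eq_one_iff_adj] at h1
    exact Γ.loopless.irrefl a
      (diag_adj_support h1 (Sym2.mem_mk_left a b) (Sym2.mem_mk_left a c))
  · intro h3
    have hr : (diagGraph Γ).Reachable s(a, b) s(a, c) := by
      by_contra hnr
      rw [SimpleGraph.dist_eq_zero_of_not_reachable hnr] at h3
      omega
    obtain ⟨w, hw⟩ := hr.exists_walk_length_eq_dist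
    rw [h3] at hw
    have hA1 := w.adj_getVert_succ (i := 0) (by omega)
    have hA2 := w.adj_getVert_succ (i := 1) (by omega)
    have hA3 := w.adj_getVert_succ (i := 2) (by omega)
    have h0 : w.getVert 0 = s(a, b) := w.getVert_zero
    have hL : w.getVert 3 = s(a, c) := by
      rw [show (3 : ℕ) = w.length from hw.symm]; exact w.getVert_length
    rw [h0] at hA1
    rw [hL] at hA3
    obtain ⟨⟨x, y⟩, h1'⟩ := Quot.exists_rep (w.getVert 1)
    obtain ⟨⟨z, u⟩, h2'⟩ := Quot.exists_rep (w.getVert 2)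
    rw [show (0 + 1 : ℕ) = 1 from rfl, ← h1'] at hA1
    rw [show (1 + 1 : ℕ) = 2 from rfl, ← h1', ← h2'] at hA2
    rw [← h2'] at hA3
    classical
    have hax : Γ.Adj a x :=
      diag_adj_support hA1 (Sym2.mem_mk_left a b) (Sym2.mem_mk_left x y)
    have hxz : Γ.Adj x z :=
      diag_adj_support hA2 (Sym2.mem_mk_left x y) (Sym2.mem_mk_left z u)
    have hza : Γ.Adj z a :=
      diag_adj_support hA3 (Sym2.mem_mk_left z u) (Sym2.mem_mk_left a c)
    exact hTF {a, x, z}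
      (SimpleGraph.is3Clique_triple_iff.mpr ⟨hax, hza.symm, hxz⟩)
end

section
/- Let Γ be a finite graph and suppose a, b are nonadjacent vertices of Γ with at least three common neighbors c₀, c₁, c₂. If Γ is triangle-free, then the c_i are pairwise nonadjacent, and the pairs {a,b}*{c_i,c_j} for i ≠ j give at least three distinct induced squares sharing the diagonal {a,b}; hence the vertex {a,b} of the diagonal graph ⧄(Γ) has degree at least 3 and in particular is not a leaf of ⧄(Γ). -/
theorem stmt_13 {V : Type*} [Fintype V] (Γ : SimpleGraph V) (hTF : Γ.CliqueFree 3)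
    (a b c₀ c₁ c₂ : V) (hab : a ≠ b) (hnadj : ¬ Γ.Adj a b)
    (hdist : c₀ ≠ c₁ ∧ c₀ ≠ c₂ ∧ c₁ ≠ c₂)
    (hc : ∀ c ∈ ({c₀, c₁, c₂} : Set V), Γ.Adj a c ∧ Γ.Adj b c) :
    (∀ c ∈ ({c₀, c₁, c₂} : Set V), ∀ c' ∈ ({c₀, c₁, c₂} : Set V), ¬ Γ.Adj c c') ∧
    (∀ c ∈ ({c₀, c₁, c₂} : Set V), ∀ c' ∈ ({c₀, c₁, c₂} : Set V), c ≠ c' →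
      IsInducedSquare Γ a b c c' ∧ (diagGraph Γ).Adj s(a, b) s(c, c')) ∧
    3 ≤ {q : Sym2 V | (diagGraph Γ).Adj s(a, b) q}.ncard := by
  classical
  obtain ⟨h01, h02, h12⟩ := hdist
  have hna : ∀ c ∈ ({c₀, c₁, c₂} : Set V), ∀ c' ∈ ({c₀, c₁, c₂} : Set V), ¬ Γ.Adj c c' := by
    intro c hcm c' hcm' hadj
    exact (SimpleGraph.is3Clique_triple_iff.2
      ⟨(hc c hcm).1, (hc c' hcm').1, hadj⟩).not_cliqueFree hTF
  have hsq : ∀ c ∈ ({c₀, c₁, c₂} : Set V), ∀ c' ∈ ({c₀, c₁, c₂} : Set V), c ≠ c' →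
      IsInducedSquare Γ a b c c' ∧ (diagGraph Γ).Adj s(a, b) s(c, c') := by
    intro c hcm c' hcm' hne
    have sq : IsInducedSquare Γ a b c c' :=
      ⟨hab, hne, hnadj, hna c hcm c' hcm', (hc c hcm).1, (hc c' hcm').1,
        (hc c hcm).2, (hc c' hcm').2⟩
    refine ⟨sq, ⟨?_, a, b, c, c', rfl, rfl, sq⟩⟩
    intro h
    rw [Sym2.eq_iff] at h
    rcases h with ⟨h1, _⟩ | ⟨h1, _⟩
    · exact Γ.loopless.irrefl c (h1 ▸ (hc c hcm).1)
    · exact Γ.loopless.irrefl c' (h1 ▸ (hc c' hcm').1)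
  refine ⟨hna, hsq, ?_⟩
  have m0 : c₀ ∈ ({c₀, c₁, c₂} : Set V) := by simp
  have m1 : c₁ ∈ ({c₀, c₁, c₂} : Set V) := by simp
  have m2 : c₂ ∈ ({c₀, c₁, c₂} : Set V) := by simp
  have hsub : ({s(c₀, c₁), s(c₀, c₂), s(c₁, c₂)} : Set (Sym2 V)) ⊆
      {q : Sym2 V | (diagGraph Γ).Adj s(a, b) q} := by
    intro q hq
    rcases hq with rfl | rfl | rfl
    · exact (hsq c₀ m0 c₁ m1 h01).2
    · exact (hsq c₀ m0 c₂ m2 h02).2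
    · exact (hsq c₁ m1 c₂ m2 h12).2
  have hfin : {q : Sym2 V | (diagGraph Γ).Adj s(a, b) q}.Finite := Set.toFinite _
  have hn3 : ({s(c₀, c₁), s(c₀, c₂), s(c₁, c₂)} : Set (Sym2 V)).ncard = 3 :=
    Set.ncard_eq_three.2 ⟨_, _, _, by simp [Sym2.eq_iff]; tauto, by simp [Sym2.eq_iff]; tauto,
      by simp [Sym2.eq_iff]; tauto, rfl⟩
  calc (3 : ℕ) = ({s(c₀, c₁), s(c₀, c₂), s(c₁, c₂)} : Set (Sym2 V)).ncard := hn3.symm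
    _ ≤ _ := Set.ncard_le_ncard hsub hfin
end

section
/- Let γ be a shortest simple cycle in a graph Γ among those containing a distinguished edge e and failing some hereditary property P (meaning: if γ' is a simple cycle containing e with hull contained in the hull of γ, then γ' also fails P whenever γ does). If γ contains two vertices v, w adjacent in Γ but not consecutive along γ, then γ can be surgered along the edge v–w into two strictly shorter simple cycles γ', γ'' whose union of edge sets is the edge set of γ plus the edge v–w, and one of them contains e. Consequently a minimal such cycle γ is induced. -/
open SimpleGraph Walk

private lemma end_mem_tail_of_not_nil {V : Type*} {Γ : SimpleGraph V} {a b : V}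
    (p : Γ.Walk a b) (h : ¬ p.Nil) : b ∈ p.support.tail := by
  cases p with
  | nil => simp at h
  | cons h q => simp [q.end_mem_support]

private lemma edge_mem_of_length_one {V : Type*} {Γ : SimpleGraph V} {a b : V}
    (p : Γ.Walk a b) (h : p.length = 1) : s(a, b) ∈ p.edges := by
  cases p with
  | nil => simp at h
  | cons hadj q =>
    have hq : q.length = 0 := by simpa using h
    have := q.eq_of_length_eq_zero hq
    subst this
    simp

private lemma paths_of_cycle_split {V : Type*} [DecidableEq V] {Γ : SimpleGraph V} {v w : V}
    (c : Γ.Walk v v) (hc : c.IsCycle) (hw : w ∈ c.support) (hne : w ≠ v) :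
    (c.takeUntil w hw).IsPath ∧ (c.dropUntil w hw).IsPath := by
  set p := c.takeUntil w hw with hp
  set q := c.dropUntil w hw with hq
  have hspec : p.append q = c := c.take_spec hw
  have hnod : (p.support.tail ++ q.support.tail).Nodup := by
    rw [← Walk.tail_support_append, hspec]
    exact hc.support_nodup
  rw [List.nodup_append] at hnod
  obtain ⟨hnp, hnq, hdisj⟩ := hnod
  have hpne : v ≠ w := fun h => hne h.symm
  have hvq : v ∈ q.support.tail := end_mem_tail_of_not_nil q (by
    intro h
    exact hne (Walk.Nil.eq h))
  have hwp : w ∈ p.support.tail := end_mem_tail_support_of_ne hpne p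
  constructor
  · rw [Walk.isPath_def, Walk.support_eq_cons, List.nodup_cons]
    exact ⟨fun hvp => hdisj _ hvp _ hvq rfl, hnp⟩
  · rw [Walk.isPath_def, Walk.support_eq_cons, List.nodup_cons]
    exact ⟨fun hwq => hdisj _ hwp _ hwq rfl, hnq⟩

theorem stmt_14 {V : Type*} (Γ : SimpleGraph V) (e : Sym2 V)
    (Bad : ∀ u : V, Γ.Walk u u → Prop)
    (u : V) (γ : Γ.Walk u u) (hcyc : γ.IsCycle)
    (he : e ∈ γ.edges) (hbad : Bad u γ)
    (hmin : ∀ (v : V) (γ' : Γ.Walk v v), γ'.IsCycle → e ∈ γ'.edges →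
      Bad v γ' → γ.length ≤ γ'.length)
    (hHered : ∀ (v : V) (γ' : Γ.Walk v v), γ'.IsCycle → e ∈ γ'.edges →
      (∀ f ∈ γ'.edges, f ∈ γ.edges ∨
        ∃ x y : V, x ∈ γ.support ∧ y ∈ γ.support ∧ Γ.Adj x y ∧ f = s(x, y)) →
      Bad v γ') :
    (∀ v w : V, v ∈ γ.support → w ∈ γ.support → Γ.Adj v w → s(v, w) ∈ γ.edges) ∧
    (∀ v w : V, v ∈ γ.support → w ∈ γ.support → Γ.Adj v w → s(v, w) ∉ γ.edges →
      ∃ (a : V) (γ' : Γ.Walk a a) (b : V) (γ'' : Γ.Walk b b),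
        γ'.IsCycle ∧ γ''.IsCycle ∧
        γ'.length < γ.length ∧ γ''.length < γ.length ∧
        {f : Sym2 V | f ∈ γ'.edges ∨ f ∈ γ''.edges} =
          insert s(v, w) {f : Sym2 V | f ∈ γ.edges} ∧
        (e ∈ γ'.edges ∨ e ∈ γ''.edges)) := by
  classical
  have key : ∀ v w : V, v ∈ γ.support → w ∈ γ.support → Γ.Adj v w → s(v, w) ∈ γ.edges := by
    intro v w hv hw hadj
    by_contra hne
    have hvw : v ≠ w := hadj.ne
    -- rotate γ to start at v
    set c := γ.rotate v hv with hc
    have hcycc : c.IsCycle := hcyc.rotate hv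
    have hre : c.edges ~r γ.edges := γ.rotate_edges v hv
    have hmemc : ∀ f, f ∈ c.edges ↔ f ∈ γ.edges := fun f => hre.perm.mem_iff
    -- length of c
    have h1 := congrArg Walk.length (γ.take_spec hv)
    rw [Walk.length_append] at h1
    have hlenc : c.length = γ.length := by
      rw [hc, Walk.rotate, Walk.length_append]; omega
    -- w ∈ c.support
    have hwt : w ∈ γ.support.tail := by
      rcases (Walk.mem_support_iff γ).mp hw with h | h
      · subst h; exact end_mem_tail_of_not_nil γ hcyc.not_nil
      · exact h
    have hwc : w ∈ c.support := by
      have : w ∈ c.support.tail := (γ.support_rotate v hv).mem_iff.mpr hwt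
      exact List.mem_of_mem_tail this
    -- split c at w
    set p := c.takeUntil w hwc with hp
    set q := c.dropUntil w hwc with hq
    have hspec : p.append q = c := c.take_spec hwc
    obtain ⟨hPp, hPq⟩ := paths_of_cycle_split c hcycc hwc hvw.symm
    have hlens : p.length + q.length = c.length := by
      rw [← hspec, Walk.length_append]
    have hpe : ∀ f ∈ p.edges, f ∈ γ.edges := fun f hf =>
      (hmemc f).mp (c.edges_takeUntil_subset hwc hf)
    have hqe : ∀ f ∈ q.edges, f ∈ γ.edges := fun f hf =>
      (hmemc f).mp (c.edges_dropUntil_subset hwc hf)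
    -- lengths ≥ 2
    have hpl : 2 ≤ p.length := by
      rcases Nat.lt_or_ge p.length 2 with h | h
      · interval_cases hl : p.length
        · exact (hvw (p.eq_of_length_eq_zero hl)).elim
        · exact (hne (hpe _ (edge_mem_of_length_one p hl))).elim
      · exact h
    have hql : 2 ≤ q.length := by
      rcases Nat.lt_or_ge q.length 2 with h | h
      · interval_cases hl : q.length
        · exact (hvw (q.eq_of_length_eq_zero hl).symm).elim
        · refine (hne ?_).elim
          have := hqe _ (edge_mem_of_length_one q hl)
          rwa [Sym2.eq_swap] at this
      · exact h
    -- the two surgered cycles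
    have hswap : s(w, v) = s(v, w) := Sym2.eq_swap
    have hc1 : (Walk.cons hadj.symm p).IsCycle := by
      rw [Walk.cons_isCycle_iff]
      exact ⟨hPp, fun h => hne (hswap ▸ hpe _ h)⟩
    have hc2 : (Walk.cons hadj q).IsCycle := by
      rw [Walk.cons_isCycle_iff]
      exact ⟨hPq, fun h => hne (hqe _ h)⟩
    -- e is in one of them
    have hec : e ∈ c.edges := (hmemc e).mpr he
    rw [← hspec, Walk.edges_append, List.mem_append] at hec
    have hchord1 : s(w,v) ∈ γ.edges ∨
        ∃ x y : V, x ∈ γ.support ∧ y ∈ γ.support ∧ Γ.Adj x y ∧ s(w,v) = s(x, y) :=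
      Or.inr ⟨w, v, hw, hv, hadj.symm, rfl⟩
    have hchord2 : s(v,w) ∈ γ.edges ∨
        ∃ x y : V, x ∈ γ.support ∧ y ∈ γ.support ∧ Γ.Adj x y ∧ s(v,w) = s(x, y) :=
      Or.inr ⟨v, w, hv, hw, hadj, rfl⟩
    rcases hec with hep | heq
    · have heC : e ∈ (Walk.cons hadj.symm p).edges := by
        rw [Walk.edges_cons]; exact List.mem_cons_of_mem _ hep
      have hB : Bad w (Walk.cons hadj.symm p) := by
        refine hHered w _ hc1 heC ?_
        intro f hf
        rw [Walk.edges_cons] at hf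
        rcases List.mem_cons.mp hf with h | hf
        · exact h ▸ hchord1
        · exact Or.inl (hpe _ hf)
      have := hmin w _ hc1 heC hB
      rw [Walk.length_cons] at this
      omega
    · have heC : e ∈ (Walk.cons hadj q).edges := by
        rw [Walk.edges_cons]; exact List.mem_cons_of_mem _ heq
      have hB : Bad v (Walk.cons hadj q) := by
        refine hHered v _ hc2 heC ?_
        intro f hf
        rw [Walk.edges_cons] at hf
        rcases List.mem_cons.mp hf with h | hf
        · exact h ▸ hchord2
        · exact Or.inl (hqe _ hf)
      have := hmin v _ hc2 heC hB
      rw [Walk.length_cons] at this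
      omega
  exact ⟨key, fun v w hv hw hadj hne => absurd (key v w hv hw hadj) hne⟩
end

section
/- Let Γ be a triangle-free graph satisfying: every maximal thick join of Γ is a non-square suspension. If {a,b}*{c,d} is any induced square of Γ, then at least one of the diagonals {a,b} or {c,d} is the pole of a non-square suspension that is a maximal thick join of Γ. -/
/-- `A` and `B` form a join subgraph of `Γ`. -/
def IsJoinPair {V : Type*} (Γ : SimpleGraph V) (A B : Set V) : Prop :=
  Disjoint A B ∧ ∀ a ∈ A, ∀ b ∈ B, Γ.Adj a b

/-- A thick join: a join `A * B` in which each side contains a nonadjacent pair. -/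
def IsThickJoin {V : Type*} (Γ : SimpleGraph V) (A B : Set V) : Prop :=
  IsJoinPair Γ A B ∧
    (∃ a ∈ A, ∃ a' ∈ A, a ≠ a' ∧ ¬ Γ.Adj a a') ∧
    (∃ b ∈ B, ∃ b' ∈ B, b ≠ b' ∧ ¬ Γ.Adj b b')

/-- A maximal thick join: one not properly contained in another thick join. -/
def IsMaxThickJoin {V : Type*} (Γ : SimpleGraph V) (A B : Set V) : Prop :=
  IsThickJoin Γ A B ∧ ∀ A' B' : Set V, IsThickJoin Γ A' B' →
    ((A ⊆ A' ∧ B ⊆ B') ∨ (A ⊆ B' ∧ B ⊆ A')) → A ∪ B = A' ∪ B'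

lemma thick_symm {V : Type*} {Γ : SimpleGraph V} {A B : Set V}
    (h : IsThickJoin Γ A B) : IsThickJoin Γ B A :=
  ⟨⟨h.1.1.symm, fun x hx y hy => (h.1.2 y hy x hx).symm⟩, h.2.2, h.2.1⟩

lemma max_symm {V : Type*} {Γ : SimpleGraph V} {A B : Set V}
    (h : IsMaxThickJoin Γ A B) : IsMaxThickJoin Γ B A := by
  refine ⟨thick_symm h.1, fun A' B' ht hsub => ?_⟩
  have := h.2 A' B' ht (hsub.symm.imp And.symm And.symm)
  rw [Set.union_comm] at this; exact this

theorem stmt_16 {V : Type*} (Γ : SimpleGraph V) (hTF : Γ.CliqueFree 3)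
    (hmax : ∀ A B : Set V, IsMaxThickJoin Γ A B →
      ∃ a b : V, a ≠ b ∧ ¬ Γ.Adj a b ∧
        ((A = {a, b} ∧ 3 ≤ B.ncard) ∨ (B = {a, b} ∧ 3 ≤ A.ncard)))
    (a b c d : V) (hsq : IsInducedSquare Γ a b c d) :
    ∃ C : Set V, 3 ≤ C.ncard ∧
      ((IsMaxThickJoin Γ ({a, b} : Set V) C ∧ ({c, d} : Set V) ⊆ C) ∨
       (IsMaxThickJoin Γ ({c, d} : Set V) C ∧ ({a, b} : Set V) ⊆ C)) := by
  obtain ⟨hab, hcd, hnab, hncd, hac, had, hbc, hbd⟩ := hsq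
  set Bs : Set V := {v | Γ.Adj a v ∧ Γ.Adj b v} with hBs
  set As : Set V := {v | ∀ w ∈ Bs, Γ.Adj v w} with hAs
  have hcB : c ∈ Bs := ⟨hac, hbc⟩
  have hdB : d ∈ Bs := ⟨had, hbd⟩
  have haA : a ∈ As := fun w hw => hw.1
  have hbA : b ∈ As := fun w hw => hw.2
  have hdisj : Disjoint As Bs := by
    rw [Set.disjoint_left]
    intro v hvA hvB
    exact Γ.loopless.irrefl v (hvA v hvB)
  have hthick : IsThickJoin Γ As Bs :=
    ⟨⟨hdisj, fun x hx y hy => hx y hy⟩,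
      ⟨a, haA, b, hbA, hab, hnab⟩, ⟨c, hcB, d, hdB, hcd, hncd⟩⟩
  have hmaxAB : IsMaxThickJoin Γ As Bs := by
    refine ⟨hthick, fun A' B' ht hsub => ?_⟩
    have key : ∀ A' B' : Set V, IsThickJoin Γ A' B' → As ⊆ A' → Bs ⊆ B' →
        A' = As ∧ B' = Bs := by
      intro A' B' ht hA hB
      have hB' : B' ⊆ Bs := fun v hv => ⟨ht.1.2 a (hA haA) v hv, ht.1.2 b (hA hbA) v hv⟩
      have hBeq : B' = Bs := Set.Subset.antisymm hB' hB
      have hA' : A' ⊆ As := by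
        intro v hv w hw
        exact ht.1.2 v hv w (hBeq ▸ hw)
      exact ⟨Set.Subset.antisymm hA' hA, hBeq⟩
    rcases hsub with ⟨h1, h2⟩ | ⟨h1, h2⟩
    · obtain ⟨e1, e2⟩ := key A' B' ht h1 h2
      rw [e1, e2]
    · obtain ⟨e1, e2⟩ := key B' A' (thick_symm ht) h1 h2
      rw [e1, e2, Set.union_comm]
  obtain ⟨p, q, hpq, hnpq, hcase⟩ := hmax As Bs hmaxAB
  have pair_eq : ∀ (x y : V) (S : Set V), x ≠ y → x ∈ S → y ∈ S → S = {p, q} →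
      S = ({x, y} : Set V) := by
    intro x y S hxy hxS hyS hSpq
    rw [hSpq] at hxS hyS ⊢
    rcases hxS with rfl | rfl <;> rcases hyS with rfl | rfl <;>
      simp_all [Set.pair_comm]
  rcases hcase with ⟨hApq, hB3⟩ | ⟨hBpq, hA3⟩
  · have : As = ({a, b} : Set V) := pair_eq a b As hab haA hbA hApq
    exact ⟨Bs, hB3, Or.inl ⟨this ▸ hmaxAB,
      Set.insert_subset hcB (Set.singleton_subset_iff.mpr hdB)⟩⟩
  · have : Bs = ({c, d} : Set V) := pair_eq c d Bs hcd hcB hdB hBpq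
    exact ⟨As, hA3, Or.inr ⟨this ▸ max_symm hmaxAB,
      Set.insert_subset haA (Set.singleton_subset_iff.mpr hbA)⟩⟩
end

section
/- In the group G = F × ℤ where F is a finitely generated free group of rank ≥ 2 with ℤ = ⟨z⟩ central, every maximal subgroup isomorphic to ℤ² is of the form ⟨f⟩ × ⟨z⟩ where f ∈ F is a nontrivial element that is not a proper power. -/
open Subgroup

private lemma freeGroup_eq_one_of_isEmpty {α : Type*} [IsEmpty α] (x : FreeGroup α) : x = 1 :=
  FreeGroup.induction_on (C := fun y => y = 1) x rfl (fun i => isEmptyElim i)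
    (fun i _ => isEmptyElim i) (fun a b ha hb => by rw [ha, hb, one_mul])

private lemma mem_zpowers_of_subsingleton {α : Type*} [Subsingleton α] (x₀ : α)
    (g : FreeGroup α) : g ∈ zpowers (FreeGroup.of x₀) :=
  FreeGroup.induction_on (C := fun y => y ∈ zpowers (FreeGroup.of x₀)) g (one_mem _)
    (fun x => by rw [Subsingleton.elim x x₀]; exact mem_zpowers _)
    (fun x hx => inv_mem hx) (fun a b ha hb => mul_mem ha hb)

private lemma freeGroup_not_isOfFinOrder {ι : Type*} {g : FreeGroup ι} (hg : g ≠ 1) :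
    ¬ IsOfFinOrder g := by
  intro hfin
  haveI : Finite ↥(zpowers g) := hfin.finite_zpowers.to_subtype
  have hne : Nonempty (IsFreeGroup.Generators ↥(zpowers g)) := by
    by_contra h
    rw [not_nonempty_iff] at h
    have h1 : (⟨g, mem_zpowers g⟩ : ↥(zpowers g)) = 1 := by
      apply (IsFreeGroup.toFreeGroup ↥(zpowers g)).injective
      rw [map_one]
      exact freeGroup_eq_one_of_isEmpty _
    exact hg (by simpa using congrArg Subtype.val h1)
  obtain ⟨x⟩ := hne
  have h1 : IsOfFinOrder (IsFreeGroup.of x : ↥(zpowers g)) := isOfFinOrder_of_finite _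
  have h2 := (IsFreeGroup.lift (fun _ => Multiplicative.ofAdd (1 : ℤ)) :
      ↥(zpowers g) →* Multiplicative ℤ).isOfFinOrder h1
  rw [IsFreeGroup.lift_of] at h2
  obtain ⟨n, hn, hpow⟩ := isOfFinOrder_iff_pow_eq_one.mp h2
  have : (n : ℤ) = 0 := by
    have := congrArg Multiplicative.toAdd hpow
    simpa using this
  omega

private lemma exists_gen_of_isFreeGroup_comm {G : Type*} [Group G] [IsFreeGroup G]
    (hcomm : ∀ a b : G, a * b = b * a) : ∃ t : G, ∀ g : G, g ∈ zpowers t := by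
  classical
  have hsub : Subsingleton (IsFreeGroup.Generators G) := by
    by_contra h
    rw [not_subsingleton_iff_nontrivial] at h
    obtain ⟨i, j, hij⟩ := h.exists_pair_ne
    set φ : G →* Equiv.Perm (Fin 3) :=
      IsFreeGroup.lift (fun k => if k = i then Equiv.swap 0 1 else
        if k = j then Equiv.swap 1 2 else 1) with hφ
    have h1 : φ (IsFreeGroup.of i) = Equiv.swap 0 1 := by
      rw [hφ, IsFreeGroup.lift_of]; simp
    have h2 : φ (IsFreeGroup.of j) = Equiv.swap 1 2 := by
      rw [hφ, IsFreeGroup.lift_of]; simp [hij.symm]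
    have h3 := congrArg φ (hcomm (IsFreeGroup.of i) (IsFreeGroup.of j))
    rw [map_mul, map_mul, h1, h2] at h3
    have h4 := congrFun (congrArg (fun e : Equiv.Perm (Fin 3) => ⇑e) h3) 2
    simp [Equiv.swap_apply_def] at h4
  rcases isEmpty_or_nonempty (IsFreeGroup.Generators G) with h | h
  · refine ⟨1, fun g => ?_⟩
    have hg1 : g = 1 := by
      apply (IsFreeGroup.toFreeGroup G).injective
      rw [map_one]
      exact freeGroup_eq_one_of_isEmpty _
    rw [hg1]; exact one_mem _
  · obtain ⟨x₀⟩ := h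
    refine ⟨(IsFreeGroup.toFreeGroup G).symm (FreeGroup.of x₀), fun g => ?_⟩
    obtain ⟨n, hn⟩ := mem_zpowers_iff.mp
      (mem_zpowers_of_subsingleton x₀ ((IsFreeGroup.toFreeGroup G) g))
    exact mem_zpowers_iff.mpr ⟨n, by rw [← map_zpow, hn, MulEquiv.symm_apply_apply]⟩

private lemma not_injective_zz_to_z (φ : Multiplicative (ℤ × ℤ) →* Multiplicative ℤ) :
    ¬ Function.Injective φ := by
  intro hinj
  set ψ : ℤ × ℤ →+ ℤ :=
    { toFun := fun v => Multiplicative.toAdd (φ (Multiplicative.ofAdd v))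
      map_zero' := by simpa using congrArg Multiplicative.toAdd (map_one φ)
      map_add' := fun u v => by
        show Multiplicative.toAdd (φ (Multiplicative.ofAdd (u + v)))
          = Multiplicative.toAdd (φ (Multiplicative.ofAdd u))
            + Multiplicative.toAdd (φ (Multiplicative.ofAdd v))
        rw [show Multiplicative.ofAdd (u + v)
            = Multiplicative.ofAdd u * Multiplicative.ofAdd v from rfl, map_mul]
        rfl } with hψdef
  have hψ : Function.Injective ψ := by
    intro u v h
    have : φ (Multiplicative.ofAdd u) = φ (Multiplicative.ofAdd v) :=
      Multiplicative.toAdd.injective h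
    exact Multiplicative.ofAdd.injective (hinj this)
  set a := ψ (1, 0) with ha
  set b := ψ (0, 1) with hb
  have h1 : ((b, -a) : ℤ × ℤ) = b • ((1 : ℤ), (0 : ℤ)) + (-a) • ((0 : ℤ), (1 : ℤ)) := by
    simp [Prod.ext_iff]
  have key : ψ (b, -a) = 0 := by
    rw [h1, map_add, map_zsmul, map_zsmul, ← ha, ← hb]
    simp [smul_eq_mul]
    ring
  have hba : ((b, -a) : ℤ × ℤ) = 0 := hψ (by rw [key, map_zero])
  have ha0 : a = 0 := by
    have := congrArg Prod.snd hba; simpa using this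
  have h10 : ((1, 0) : ℤ × ℤ) = 0 := hψ (by rw [← ha, ha0, map_zero])
  simpa using congrArg Prod.fst h10

private lemma prod_top_equiv {ι : Type*} {w : FreeGroup ι} (hw : w ≠ 1) :
    Nonempty ((zpowers w).prod (⊤ : Subgroup (Multiplicative ℤ)) ≃* Multiplicative (ℤ × ℤ)) := by
  have hnf : ¬ IsOfFinOrder w := freeGroup_not_isOfFinOrder hw
  have hinj : Function.Injective (fun n : ℤ => w ^ n) :=
    injective_zpow_iff_not_isOfFinOrder.mpr hnf
  set ρ : Multiplicative ℤ →* ↥(zpowers w) :=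
    zpowersHom _ (⟨w, mem_zpowers w⟩ : ↥(zpowers w)) with hρ
  have hρc : ∀ x : Multiplicative ℤ, ((ρ x : ↥(zpowers w)) : FreeGroup ι) = w ^ x.toAdd := by
    intro x
    rw [hρ, zpowersHom_apply]
    simp
  have hbij : Function.Bijective ρ := by
    constructor
    · intro x y h
      have : w ^ x.toAdd = w ^ y.toAdd := by rw [← hρc, ← hρc, h]
      exact Multiplicative.toAdd.injective (hinj this)
    · rintro ⟨x, hx⟩
      obtain ⟨n, rfl⟩ := mem_zpowers_iff.mp hx
      exact ⟨Multiplicative.ofAdd n, Subtype.ext (by rw [hρc]; rfl)⟩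
  exact ⟨((Subgroup.prodEquiv _ _).trans
    ((MulEquiv.ofBijective ρ hbij).symm.prodCongr
      (Subgroup.topEquiv : (⊤ : Subgroup (Multiplicative ℤ)) ≃* Multiplicative ℤ))).trans
    (MulEquiv.prodMultiplicative (G := ℤ) (H := ℤ)).symm⟩

theorem stmt_18 {ι : Type*} (hrank : ∃ i j : ι, i ≠ j)
    (H : Subgroup (FreeGroup ι × Multiplicative ℤ))
    (hZ2 : Nonempty (H ≃* Multiplicative (ℤ × ℤ)))
    (hmax : ∀ K : Subgroup (FreeGroup ι × Multiplicative ℤ),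
      Nonempty (K ≃* Multiplicative (ℤ × ℤ)) → H ≤ K → H = K) :
    ∃ f : FreeGroup ι, f ≠ 1 ∧
      (∀ (g : FreeGroup ι) (n : ℤ), f = g ^ n → n = 1 ∨ n = -1) ∧
      H = (Subgroup.zpowers f).prod (⊤ : Subgroup (Multiplicative ℤ)) := by
  classical
  obtain ⟨e⟩ := hZ2
  have hcomm : ∀ a ∈ H, ∀ b ∈ H, a * b = b * a := by
    intro a ha b hb
    have h1 : (⟨a, ha⟩ : H) * ⟨b, hb⟩ = ⟨b, hb⟩ * ⟨a, ha⟩ :=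
      e.injective (by rw [map_mul, map_mul, mul_comm])
    exact congrArg Subtype.val h1
  set A : Subgroup (FreeGroup ι) :=
    H.map (MonoidHom.fst (FreeGroup ι) (Multiplicative ℤ)) with hAdef
  have hAcomm : ∀ a b : ↥A, a * b = b * a := by
    rintro ⟨a, ha⟩ ⟨b, hb⟩
    obtain ⟨x, hx, rfl⟩ := ha
    obtain ⟨y, hy, rfl⟩ := hb
    apply Subtype.ext
    simpa using congrArg Prod.fst (hcomm x hx y hy)
  obtain ⟨t, ht⟩ := exists_gen_of_isFreeGroup_comm (G := ↥A) hAcomm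
  set f₀ : FreeGroup ι := (t : FreeGroup ι) with hf₀def
  have hA : A = zpowers f₀ := by
    apply le_antisymm
    · intro a ha
      obtain ⟨n, hn⟩ := mem_zpowers_iff.mp (ht ⟨a, ha⟩)
      refine mem_zpowers_iff.mpr ⟨n, ?_⟩
      have := congrArg Subtype.val hn
      rw [SubgroupClass.coe_zpow] at this
      exact this
    · rw [zpowers_le]; exact t.2
  have hf0 : f₀ ≠ 1 := by
    intro h
    have hfst : ∀ x ∈ H, (x : FreeGroup ι × Multiplicative ℤ).1 = 1 := by
      intro x hx
      have hm : x.1 ∈ A := ⟨x, hx, rfl⟩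
      rw [hA, h, zpowers_one_eq_bot, Subgroup.mem_bot] at hm
      exact hm
    set σ : H →* Multiplicative ℤ := (MonoidHom.snd _ _).comp H.subtype with hσdef
    have hσ : Function.Injective σ := by
      intro x y hxy
      apply Subtype.ext
      apply Prod.ext
      · rw [hfst x x.2, hfst y y.2]
      · exact hxy
    exact not_injective_zz_to_z (σ.comp e.symm.toMonoidHom) (hσ.comp e.symm.injective)
  have hnf : ¬ IsOfFinOrder f₀ := freeGroup_not_isOfFinOrder hf0
  have hle : H ≤ (zpowers f₀).prod ⊤ := by
    intro x hx
    exact Subgroup.mem_prod.mpr ⟨hA ▸ (⟨x, hx, rfl⟩ : x.1 ∈ A), mem_top _⟩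
  have hK : H = (zpowers f₀).prod ⊤ := hmax _ (prod_top_equiv hf0) hle
  refine ⟨f₀, hf0, ?_, hK⟩
  intro g n hgn
  have hg1 : g ≠ 1 := by
    rintro rfl
    rw [one_zpow] at hgn
    exact hf0 hgn
  have hK' : H = (zpowers g).prod ⊤ := by
    apply hmax _ (prod_top_equiv hg1)
    rw [hK]
    intro x hx
    obtain ⟨hx1, hx2⟩ := Subgroup.mem_prod.mp hx
    refine Subgroup.mem_prod.mpr ⟨?_, hx2⟩
    obtain ⟨m, hm⟩ := mem_zpowers_iff.mp hx1
    exact mem_zpowers_iff.mpr ⟨n * m, by rw [zpow_mul, ← hgn, hm]⟩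
  have hg_mem : g ∈ zpowers f₀ := by
    have hm : (g, (1 : Multiplicative ℤ)) ∈ H := by
      rw [hK']
      exact Subgroup.mem_prod.mpr ⟨mem_zpowers g, mem_top _⟩
    rw [hK] at hm
    exact (Subgroup.mem_prod.mp hm).1
  obtain ⟨m, hm⟩ := mem_zpowers_iff.mp hg_mem
  have hpow : f₀ ^ (m * n) = f₀ ^ (1 : ℤ) := by
    rw [zpow_mul, hm, ← hgn, zpow_one]
  have hmn : m * n = 1 :=
    injective_zpow_iff_not_isOfFinOrder.mpr hnf hpow
  rcases Int.mul_eq_one_iff_eq_one_or_neg_one.mp hmn with ⟨_, h⟩ | ⟨_, h⟩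
  · exact Or.inl h
  · exact Or.inr h
end
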